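/- arXiv:2411.19881 — 2 statements merged into one kernel-verified Lean document; each statement's English description precedes it below -/
import Mathlib

section
/- For any fair division instance with two agents having identical valuations v: 2^M → ℤ where v(S) ∈ {0, a, b} for negative integers a > b, if an EF1 allocation exists for the instance obtained by replacing values a with 1, b with 2, and 0 with 0, then an EF1 allocation exists for the original instance. -/
open Finset

/-- EF1 for an allocation among `n` agents with a common valuation `v`. -/
def EF1Id {M : Type*} [DecidableEq M] {n : ℕ} (v : Finset M → ℤ)
    (A : Fin n → Finset M) : Prop :=
  ∀ i j, v (A i) < v (A j) →
    ∃ x ∈ A i ∪ A j, v ((A i).erase x) ≥ v ((A j).erase x)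

/-- An allocation is a partition of the items. -/
def IsPartition {M : Type*} [DecidableEq M] [Fintype M] {n : ℕ}
    (A : Fin n → Finset M) : Prop :=
  (∀ i j, i ≠ j → Disjoint (A i) (A j)) ∧ (Finset.univ.biUnion A = Finset.univ)

/-- Reversing the order of values swaps envier and envied: an EF1 witness for `g ∘ v` at
`(j, i)` is one for `v` at `(i, j)`. -/
theorem EF1Id.of_comp_strictAntiOn {M : Type*} [DecidableEq M] {n : ℕ} {v : Finset M → ℤ}
    {g : ℤ → ℤ} {s : Set ℤ} (hg : StrictAntiOn g s) (hv : ∀ S, v S ∈ s)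
    {A : Fin n → Finset M} (h : EF1Id (g ∘ v) A) : EF1Id v A := by
  intro i j hij
  obtain ⟨x, hx, hle⟩ := h j i ((hg.lt_iff_gt (hv _) (hv _)).2 hij)
  exact ⟨x, union_comm (A i) (A j) ▸ hx, (hg.le_iff_ge (hv _) (hv _)).1 hle⟩

theorem strictAntiOn_ite_eq_ite_eq {a b : ℤ} (ha : a < 0) (hab : b < a) :
    StrictAntiOn (fun t : ℤ => if t = a then (1 : ℤ) else if t = b then 2 else 0) {0, a, b} := by
  rintro x (rfl | rfl | rfl) y (rfl | rfl | rfl) hxy <;> simp only <;> split_ifs <;> omega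

theorem stmt0_general {M : Type*} [DecidableEq M] [Fintype M]
    (v : Finset M → ℤ) (a b : ℤ) (ha : a < 0) (hab : b < a)
    (hrange : ∀ S : Finset M, v S = 0 ∨ v S = a ∨ v S = b)
    (v' : Finset M → ℤ)
    (hv' : ∀ S : Finset M,
      v' S = if v S = a then 1 else if v S = b then 2 else 0)
    (hEF1' : ∃ A : Fin 2 → Finset M, IsPartition A ∧ EF1Id v' A) :
    ∃ A : Fin 2 → Finset M, IsPartition A ∧ EF1Id v A := by
  obtain ⟨A, hA, hEF1⟩ := hEF1'
  obtain rfl : v' = (fun t : ℤ => if t = a then 1 else if t = b then 2 else 0) ∘ v := funext hv'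
  exact ⟨A, hA,
    hEF1.of_comp_strictAntiOn (s := {0, a, b}) (strictAntiOn_ite_eq_ite_eq ha hab) hrange⟩

theorem stmt0 {M : Type*} [DecidableEq M] [Fintype M]
    (v : Finset M → ℤ) (a b : ℤ) (ha : a < 0) (hb : b < 0) (hab : b < a)
    (hrange : ∀ S : Finset M, v S = 0 ∨ v S = a ∨ v S = b)
    (v' : Finset M → ℤ)
    (hv' : ∀ S : Finset M,
      v' S = if v S = a then 1 else if v S = b then 2 else 0)
    (hEF1' : ∃ A : Fin 2 → Finset M, IsPartition A ∧ EF1Id v' A) :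
    ∃ A : Fin 2 → Finset M, IsPartition A ∧ EF1Id v A :=
  stmt0_general v a b ha hab hrange v' hv' hEF1'
end

section
/- Resolving a top-trading envy cycle preserves EF1: if A is an EF1 allocation and C is a directed cycle in the top-trading envy graph T_A, then the cycle-swapped allocation A^C is EF1, and moreover no agent in C envies any other agent in A^C. -/
open Finset

/-- EF1 for an allocation among agents `N` with valuations `v i`. -/
def EF1 {M : Type*} [DecidableEq M] {N : Type*} (v : N → Finset M → ℤ)
    (A : N → Finset M) : Prop :=
  ∀ i j, v i (A i) < v i (A j) →
    ∃ x ∈ A i ∪ A j, v i ((A i).erase x) ≥ v i ((A j).erase x)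

/-- An agent fixed by `σ` keeps her bundle and faces a permutation of the old bundles, so her
EF1 guarantee carries over; an agent moved by `σ` receives a most-preferred bundle and envies
nobody. -/
theorem EF1.comp_perm {M : Type*} [DecidableEq M] {N : Type*}
    {v : N → Finset M → ℤ} {A : N → Finset M} (hEF1 : EF1 v A) (σ : Equiv.Perm N)
    (htop : ∀ i, σ i ≠ i → ∀ j, v i (A j) ≤ v i (A (σ i))) :
    EF1 v (fun i => A (σ i)) := by
  intro i j hlt
  by_cases hi : σ i = i
  · simp only [hi] at hlt ⊢
    exact hEF1 i (σ j) hlt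
  · exact absurd hlt (not_lt.mpr (htop i hi (σ j)))

theorem stmt12_general {M : Type*} [DecidableEq M] {N : Type*}
    (v : N → Finset M → ℤ) (A : N → Finset M)
    (σ : Equiv.Perm N)
    -- every agent moved by the cycle points to her most-preferred bundle,
    -- which she strictly prefers to her own:
    (htop : ∀ i, σ i ≠ i →
      (∀ j, v i (A (σ i)) ≥ v i (A j)) ∧ v i (A (σ i)) > v i (A i))
    (hEF1 : EF1 v A) :
    EF1 v (fun i => A (σ i)) ∧
    (∀ i, σ i ≠ i → ∀ j, v i (A (σ i)) ≥ v i (A (σ j))) :=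
  ⟨hEF1.comp_perm σ fun i hi => (htop i hi).1,
    fun i hi j => (htop i hi).1 (σ j)⟩

theorem stmt12 {M : Type*} [DecidableEq M] {N : Type*}
    (v : N → Finset M → ℤ) (A : N → Finset M)
    (σ : Equiv.Perm N) (hcyc : σ.IsCycle)
    -- every agent moved by the cycle points to her most-preferred bundle,
    -- which she strictly prefers to her own:
    (htop : ∀ i, σ i ≠ i →
      (∀ j, v i (A (σ i)) ≥ v i (A j)) ∧ v i (A (σ i)) > v i (A i))
    (hEF1 : EF1 v A) :
    EF1 v (fun i => A (σ i)) ∧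
    (∀ i, σ i ≠ i → ∀ j, v i (A (σ i)) ≥ v i (A (σ j))) :=
  stmt12_general v A σ htop hEF1
end
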